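/- For positive real numbers s ≠ t, the inequality ψ(x + √(st)) < (ln Γ(x+t) - ln Γ(x+s))/(t-s) < ψ(x + (s+t)/2) holds for all x ≥ 0. -/

import Mathlib

open Real Set Filter Topology Finset

noncomputable def psi (x : ℝ) : ℝ := deriv (fun t => Real.log (Real.Gamma t)) x

lemma lg_diff {y : ℝ} (hy : 0 < y) :
    DifferentiableAt ℝ (fun t => Real.log (Real.Gamma t)) y :=
  (Real.differentiableAt_Gamma fun m =>
    ((neg_nonpos.mpr m.cast_nonneg).trans_lt hy).ne').log (Real.Gamma_pos_of_pos hy).ne'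

lemma lg_convex : ConvexOn ℝ (Ioi 0) (fun t => Real.log (Real.Gamma t)) := by
  simpa [Function.comp_def] using Real.convexOn_log_Gamma

lemma lg_rec {y : ℝ} (hy : 0 < y) :
    Real.log (Real.Gamma (y + 1)) = Real.log (Real.Gamma y) + Real.log y := by
  rw [Real.Gamma_add_one hy.ne', Real.log_mul hy.ne' (Real.Gamma_pos_of_pos hy).ne', add_comm]

lemma psi_rec {y : ℝ} (hy : 0 < y) : psi (y + 1) = psi y + 1 / y := by
  unfold psi
  rw [← deriv_comp_add_const, one_div, ← Real.deriv_log,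
    ← deriv_add (lg_diff hy) (Real.differentiableAt_log hy.ne')]
  apply Filter.EventuallyEq.deriv_eq
  filter_upwards [eventually_gt_nhds hy] with z hz using lg_rec hz

lemma psi_le_log {y : ℝ} (hy : 0 < y) : psi y ≤ Real.log y := by
  have h := lg_convex.deriv_le_slope (mem_Ioi.mpr hy)
    (mem_Ioi.mpr (by linarith : (0:ℝ) < y + 1)) (by linarith) (lg_diff hy)
  rwa [slope_def_field, lg_rec hy, add_sub_cancel_left, add_sub_cancel_left, div_one] at h

lemma log_le_psi {y : ℝ} (hy : 0 < y) : Real.log y ≤ psi (y + 1) := by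
  have h := lg_convex.slope_le_deriv (mem_Ioi.mpr hy)
    (mem_Ioi.mpr (by linarith : (0:ℝ) < y + 1)) (by linarith) (lg_diff (by linarith))
  rwa [slope_def_field, lg_rec hy, add_sub_cancel_left, add_sub_cancel_left, div_one] at h

lemma psi_shift {y : ℝ} (hy : 0 < y) (n : ℕ) :
    psi (y + n) = psi y + ∑ m ∈ Finset.range n, 1 / (y + m) := by
  induction n with
  | zero => simp
  | succ n ih =>
    have : y + (n + 1 : ℕ) = (y + n) + 1 := by push_cast; ring
    rw [this, psi_rec (by positivity), ih, Finset.sum_range_succ]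
    ring

lemma lg_shift {y : ℝ} (hy : 0 < y) (n : ℕ) :
    Real.log (Real.Gamma (y + n)) =
      Real.log (Real.Gamma y) + ∑ m ∈ Finset.range n, Real.log (y + m) := by
  induction n with
  | zero => simp
  | succ n ih =>
    have : y + (n + 1 : ℕ) = (y + n) + 1 := by push_cast; ring
    rw [this, lg_rec (by positivity), ih, Finset.sum_range_succ]
    ring

lemma tendsto_log_add_div (b : ℝ) :
    Tendsto (fun n : ℕ => Real.log (b + n) - Real.log n) atTop (𝓝 0) := by
  have h1 : Tendsto (fun n : ℕ => b / n + 1) atTop (𝓝 1) := by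
    simpa using (tendsto_const_div_atTop_nhds_zero_nat b).add_const 1
  have h2 : Tendsto (fun n : ℕ => Real.log (b / n + 1)) atTop (𝓝 0) := by
    simpa [Function.comp_def] using ((Real.continuousAt_log one_ne_zero).tendsto.comp h1)
  apply h2.congr'
  filter_upwards [eventually_gt_atTop ⌈-b⌉₊, eventually_gt_atTop 0] with n hn hn0
  have hbn : 0 < b + n := by
    have := Nat.lt_of_ceil_lt hn
    linarith
  have hn0' : (0:ℝ) < n := by exact_mod_cast hn0
  rw [← Real.log_div hbn.ne' hn0'.ne', add_div, div_self hn0'.ne']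

lemma tendsto_psi_sub_log {y : ℝ} (hy : 0 < y) :
    Tendsto (fun n : ℕ => psi (y + n) - Real.log n) atTop (𝓝 0) := by
  apply tendsto_of_tendsto_of_tendsto_of_le_of_le' (tendsto_log_add_div (y - 1))
    (tendsto_log_add_div y)
  · filter_upwards [eventually_ge_atTop 1] with n hn
    have hn' : (1:ℝ) ≤ n := by exact_mod_cast hn
    have h : y - 1 + n > 0 := by linarith
    have := log_le_psi h
    have e : y - 1 + n + 1 = y + n := by ring
    rw [e] at this
    linarith
  · filter_upwards with n
    have := psi_le_log (y := y + n) (by positivity)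
    linarith

lemma two_log_lt {w : ℝ} (hw : 1 < w) : 2 * Real.log w < w - 1 / w := by
  have hmono : StrictMonoOn (fun z : ℝ => z - 1 / z - 2 * Real.log z) (Ici 1) := by
    apply strictMonoOn_of_deriv_pos (convex_Ici 1)
    · apply ContinuousOn.sub (ContinuousOn.sub (continuousOn_id' _) ?_) ?_
      · exact continuousOn_const.div (continuousOn_id' _)
          (fun z hz => by have : (1:ℝ) ≤ z := hz; positivity)
      · exact (Real.continuousOn_log.mono (fun z hz => by
          simp only [mem_compl_iff, mem_singleton_iff]
          have : (1:ℝ) ≤ z := hz; intro h; simp [h] at this; linarith)).const_smul (2:ℝ)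
    · intro z hz
      rw [interior_Ici] at hz
      have hz1 : (1:ℝ) < z := hz
      have hz0 : z ≠ 0 := by positivity
      have hd : HasDerivAt (fun z : ℝ => z - 1 / z - 2 * Real.log z)
          (1 - (-(1 / z ^ 2)) - 2 * z⁻¹) z := by
        have h1 : HasDerivAt (fun z : ℝ => 1 / z) (-(1 / z ^ 2)) z := by
          simpa [one_div] using (hasDerivAt_inv hz0)
        exact ((hasDerivAt_id z).sub h1).sub ((Real.hasDerivAt_log hz0).const_mul 2)
      rw [hd.deriv]
      have h2 : (0:ℝ) < z ^ 2 := by positivity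
      have hz0' : (0:ℝ) < z := by linarith
      rw [← sub_pos] at hz1
      have e1 : 1 - -(1 / z ^ 2) - 2 * z⁻¹ = (z - 1) ^ 2 / z ^ 2 := by
        field_simp
        ring
      rw [e1]
      positivity
  have := hmono (self_mem_Ici) (mem_Ici.mpr hw.le) hw
  simp only [Real.log_one] at this
  norm_num at this
  rw [one_div]
  linarith

lemma log_lt_sub_div_sqrt {r : ℝ} (hr : 1 < r) : Real.log r < (r - 1) / Real.sqrt r := by
  set w := Real.sqrt r with hw
  have hw1 : 1 < w := by
    rw [hw, show (1:ℝ) = Real.sqrt 1 by simp]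
    exact Real.sqrt_lt_sqrt zero_le_one hr
  have hw0 : 0 < w := by linarith
  have hr' : r = w ^ 2 := by rw [hw, Real.sq_sqrt (by linarith)]
  have := two_log_lt hw1
  have hlog : Real.log r = 2 * Real.log w := by
    rw [hr', Real.log_pow]; push_cast; ring
  rw [hlog, hr']
  calc 2 * Real.log w < w - 1 / w := this
    _ = (w ^ 2 - 1) / w := by field_simp

lemma two_div_lt_log {r : ℝ} (hr : 1 < r) : 2 * (r - 1) / (r + 1) < Real.log r := by
  have hmono : StrictMonoOn (fun z : ℝ => Real.log z - 2 * (z - 1) / (z + 1)) (Ici 1) := by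
    apply strictMonoOn_of_deriv_pos (convex_Ici 1)
    · apply ContinuousOn.sub
      · exact Real.continuousOn_log.mono (fun z hz => by
          simp only [mem_compl_iff, mem_singleton_iff]
          have : (1:ℝ) ≤ z := hz; intro h; rw [h] at this; linarith)
      · exact ((continuousOn_const.mul (continuousOn_id'  _|>.sub continuousOn_const)).div
          ((continuousOn_id' _).add continuousOn_const)
          (fun z hz => by have : (1:ℝ) ≤ z := hz; positivity))
    · intro z hz
      rw [interior_Ici] at hz
      have hz1 : (1:ℝ) < z := hz
      have hz0 : (0:ℝ) < z := by linarith
      have hz2 : z + 1 ≠ 0 := by positivity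
      have hd : HasDerivAt (fun z : ℝ => Real.log z - 2 * (z - 1) / (z + 1))
          (z⁻¹ - (2 * (z + 1) - 2 * (z - 1) * 1) / (z + 1) ^ 2) z := by
        apply (Real.hasDerivAt_log hz0.ne').sub
        have hnum : HasDerivAt (fun z : ℝ => 2 * (z - 1)) 2 z := by
          simpa using ((hasDerivAt_id z).sub_const 1).const_mul (2:ℝ)
        have hden : HasDerivAt (fun z : ℝ => z + 1) 1 z := (hasDerivAt_id z).add_const 1
        exact hnum.div hden hz2
      rw [hd.deriv]
      have e1 : z⁻¹ - (2 * (z + 1) - 2 * (z - 1) * 1) / (z + 1) ^ 2 =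
          (z - 1) ^ 2 / (z * (z + 1) ^ 2) := by
        field_simp
        ring
      rw [e1]
      exact div_pos (pow_pos (sub_pos.mpr hz1) 2) (by positivity)
  have := hmono (self_mem_Ici) (mem_Ici.mpr hr.le) hr
  simp only [Real.log_one] at this
  norm_num at this
  linarith

lemma sqrt_le_half_add {s t : ℝ} (hs : 0 < s) (ht : 0 < t) :
    Real.sqrt (s * t) ≤ (s + t) / 2 := by
  nlinarith [sq_nonneg (Real.sqrt s - Real.sqrt t), Real.mul_self_sqrt hs.le,
    Real.mul_self_sqrt ht.le, Real.sqrt_mul_self hs.le,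
    Real.sqrt_mul hs.le t, Real.sqrt_nonneg s, Real.sqrt_nonneg t]

lemma term_ineqs {s t a : ℝ} (hs : 0 < s) (hlt : s < t) (ha : 0 ≤ a) :
    1 / (a + (s + t) / 2) < (Real.log (a + t) - Real.log (a + s)) / (t - s) ∧
    (Real.log (a + t) - Real.log (a + s)) / (t - s) < 1 / (a + Real.sqrt (s * t)) := by
  have ht : 0 < t := hs.trans hlt
  set u := a + s with hu_def
  set v := a + t with hv_def
  have hu : 0 < u := by positivity
  have hv : 0 < v := by positivity
  have huv : u < v := by simp only [hu_def, hv_def]; linarith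
  have hts : 0 < t - s := by linarith
  have hr : 1 < v / u := (one_lt_div hu).mpr huv
  have hlog : Real.log (a + t) - Real.log (a + s) = Real.log (v / u) :=
    (Real.log_div hv.ne' hu.ne').symm
  have hst0 : 0 < Real.sqrt (s * t) := Real.sqrt_pos.mpr (by positivity)
  constructor
  · have key := two_div_lt_log hr
    have e : 2 * (v / u - 1) / (v / u + 1) = 2 * (v - u) / (v + u) := by
      rw [div_eq_div_iff (by positivity) (by positivity)]
      field_simp
    rw [e] at key
    rw [hlog, div_lt_div_iff₀ (by positivity) hts]
    have h3 : 2 * (v - u) < Real.log (v / u) * (v + u) :=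
      (div_lt_iff₀ (by positivity)).mp key
    have e2 : v - u = t - s := by simp only [hu_def, hv_def]; ring
    nlinarith [h3]
  · have key := log_lt_sub_div_sqrt hr
    have hsu : 0 < Real.sqrt u := Real.sqrt_pos.mpr hu
    have hsv : 0 < Real.sqrt v := Real.sqrt_pos.mpr hv
    have huu : Real.sqrt u * Real.sqrt u = u := Real.mul_self_sqrt hu.le
    have hvv : Real.sqrt v * Real.sqrt v = v := Real.mul_self_sqrt hv.le
    have e2 : (v / u - 1) / Real.sqrt (v / u) = (v - u) / (Real.sqrt u * Real.sqrt v) := by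
      rw [Real.sqrt_div hv.le, div_eq_div_iff (by positivity) (by positivity)]
      field_simp
      linear_combination (t - s) * huu + (t - s) * hu_def
    rw [e2] at key
    have hle : a + Real.sqrt (s * t) ≤ Real.sqrt u * Real.sqrt v := by
      have h1 : (a + Real.sqrt (s * t)) ^ 2 ≤ u * v := by
        have h2 : Real.sqrt (s * t) * Real.sqrt (s * t) = s * t :=
          Real.mul_self_sqrt (by positivity)
        have h3 : Real.sqrt (s * t) ≤ (s + t) / 2 := sqrt_le_half_add hs ht
        simp only [hu_def, hv_def]
        nlinarith [mul_le_mul_of_nonneg_left h3 ha]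
      calc a + Real.sqrt (s * t) = Real.sqrt ((a + Real.sqrt (s * t)) ^ 2) :=
            (Real.sqrt_sq (by positivity)).symm
        _ ≤ Real.sqrt (u * v) := Real.sqrt_le_sqrt h1
        _ = Real.sqrt u * Real.sqrt v := Real.sqrt_mul hu.le v
    have key2 : Real.log (v / u) < (v - u) / (a + Real.sqrt (s * t)) :=
      key.trans_le (div_le_div_of_nonneg_left (by linarith) (by positivity) hle)
    rw [hlog, div_lt_div_iff₀ hts (by positivity)]
    have e3 : v - u = t - s := by simp only [hu_def, hv_def]; ring
    have h4 : Real.log (v / u) * (a + Real.sqrt (s * t)) < v - u :=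
      (lt_div_iff₀ (by positivity)).mp key2
    linarith

lemma tendsto_T {s t x c : ℝ} (hs : 0 < s) (hlt : s < t) (hx : 0 ≤ x) (hc : 0 < c) :
    Tendsto (fun n : ℕ => ∑ m ∈ Finset.range n,
        (1 / (x + c + m) - (Real.log (x + t + m) - Real.log (x + s + m)) / (t - s)))
      atTop (𝓝 ((Real.log (Real.Gamma (x + t)) - Real.log (Real.Gamma (x + s))) / (t - s)
        - psi (x + c))) := by
  have ht : 0 < t := hs.trans hlt
  have hts : 0 < t - s := by linarith
  have hxs : 0 < x + s := by positivity
  have hxt : 0 < x + t := by positivity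
  have hxc : 0 < x + c := by positivity
  set L := (Real.log (Real.Gamma (x + t)) - Real.log (Real.Gamma (x + s))) / (t - s) with hL
  set E : ℕ → ℝ := fun n =>
    (Real.log (Real.Gamma (x + t + n)) - Real.log (Real.Gamma (x + s + n))) / (t - s)
      - psi (x + c + n) with hE
  have key : ∀ n : ℕ, (∑ m ∈ Finset.range n,
      (1 / (x + c + m) - (Real.log (x + t + m) - Real.log (x + s + m)) / (t - s)))
      = (L - psi (x + c)) - E n := by
    intro n
    have h1 := lg_shift hxt n
    have h2 := lg_shift hxs n
    have h3 := psi_shift hxc n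
    simp only [hE, hL]
    rw [h1, h2, h3, Finset.sum_sub_distrib, ← Finset.sum_div, Finset.sum_sub_distrib]
    field_simp
    ring
  have hElim : Tendsto E atTop (𝓝 0) := by
    have hpsic : Tendsto (fun n : ℕ => psi (x + c + n) - Real.log n) atTop (𝓝 0) :=
      tendsto_psi_sub_log hxc
    have hD : Tendsto (fun n : ℕ =>
        (Real.log (Real.Gamma (x + t + n)) - Real.log (Real.Gamma (x + s + n))) / (t - s)
          - Real.log n) atTop (𝓝 0) := by
      apply tendsto_of_tendsto_of_tendsto_of_le_of_le' (tendsto_psi_sub_log hxs)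
        (tendsto_psi_sub_log hxt)
      · filter_upwards with n
        have hun : 0 < x + s + n := by positivity
        have hvn : 0 < x + t + n := by positivity
        have huv : x + s + n < x + t + n := by linarith
        have h := lg_convex.deriv_le_slope (mem_Ioi.mpr hun) (mem_Ioi.mpr hvn) huv
          (lg_diff hun)
        rw [slope_def_field, show x + t + (n:ℝ) - (x + s + n) = t - s by ring] at h
        have : psi (x + s + n) = deriv (fun t => Real.log (Real.Gamma t)) (x + s + n) := rfl
        rw [← this] at h
        linarith
      · filter_upwards with n
        have hun : 0 < x + s + n := by positivity
        have hvn : 0 < x + t + n := by positivity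
        have huv : x + s + n < x + t + n := by linarith
        have h := lg_convex.slope_le_deriv (mem_Ioi.mpr hun) (mem_Ioi.mpr hvn) huv
          (lg_diff hvn)
        rw [slope_def_field, show x + t + (n:ℝ) - (x + s + n) = t - s by ring] at h
        have : psi (x + t + n) = deriv (fun t => Real.log (Real.Gamma t)) (x + t + n) := rfl
        rw [← this] at h
        linarith
    have := hD.sub hpsic
    simpa [hE] using this
  have : Tendsto (fun n : ℕ => (L - psi (x + c)) - E n) atTop (𝓝 (L - psi (x + c))) := by
    simpa using (tendsto_const_nhds (x := L - psi (x + c))).sub hElim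
  exact this.congr (fun n => (key n).symm)

lemma aux {s t x : ℝ} (hs : 0 < s) (hlt : s < t) (hx : 0 ≤ x) :
    psi (x + Real.sqrt (s * t)) <
      (Real.log (Real.Gamma (x + t)) - Real.log (Real.Gamma (x + s))) / (t - s) ∧
    (Real.log (Real.Gamma (x + t)) - Real.log (Real.Gamma (x + s))) / (t - s) <
      psi (x + (s + t) / 2) := by
  have ht : 0 < t := hs.trans hlt
  set L := (Real.log (Real.Gamma (x + t)) - Real.log (Real.Gamma (x + s))) / (t - s) with hL
  have termG : ∀ m : ℕ, 0 < 1 / (x + Real.sqrt (s * t) + m)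
      - (Real.log (x + t + m) - Real.log (x + s + m)) / (t - s) := by
    intro m
    have h := (term_ineqs hs hlt (a := x + (m : ℝ)) (by positivity)).2
    have e1 : x + (m : ℝ) + t = x + t + m := by ring
    have e2 : x + (m : ℝ) + s = x + s + m := by ring
    have e3 : x + (m : ℝ) + Real.sqrt (s * t) = x + Real.sqrt (s * t) + m := by ring
    rw [e1, e2, e3] at h
    linarith
  have termA : ∀ m : ℕ, 0 < (Real.log (x + t + m) - Real.log (x + s + m)) / (t - s)
      - 1 / (x + (s + t) / 2 + m) := by
    intro m
    have h := (term_ineqs hs hlt (a := x + (m : ℝ)) (by positivity)).1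
    have e1 : x + (m : ℝ) + t = x + t + m := by ring
    have e2 : x + (m : ℝ) + s = x + s + m := by ring
    have e3 : x + (m : ℝ) + (s + t) / 2 = x + (s + t) / 2 + m := by ring
    rw [e1, e2, e3] at h
    linarith
  constructor
  · have hG := tendsto_T (c := Real.sqrt (s * t)) hs hlt hx
      (Real.sqrt_pos.mpr (by positivity))
    have mono : Monotone (fun n : ℕ => ∑ m ∈ Finset.range n,
        (1 / (x + Real.sqrt (s * t) + m)
          - (Real.log (x + t + m) - Real.log (x + s + m)) / (t - s))) := by
      apply monotone_nat_of_le_succ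
      intro n
      rw [Finset.sum_range_succ]
      linarith [termG n]
    have h1 := mono.ge_of_tendsto hG 1
    have h2 : 0 < ∑ m ∈ Finset.range 1, (1 / (x + Real.sqrt (s * t) + m)
        - (Real.log (x + t + m) - Real.log (x + s + m)) / (t - s)) := by
      rw [Finset.sum_range_one]
      simpa using termG 0
    rw [hL]
    linarith
  · have hA := tendsto_T (c := (s + t) / 2) hs hlt hx (by positivity)
    have anti : Antitone (fun n : ℕ => ∑ m ∈ Finset.range n,
        (1 / (x + (s + t) / 2 + m)
          - (Real.log (x + t + m) - Real.log (x + s + m)) / (t - s))) := by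
      apply antitone_nat_of_succ_le
      intro n
      rw [Finset.sum_range_succ]
      linarith [termA n]
    have h1 := anti.le_of_tendsto hA 1
    have h2 : ∑ m ∈ Finset.range 1, (1 / (x + (s + t) / 2 + m)
        - (Real.log (x + t + m) - Real.log (x + s + m)) / (t - s)) < 0 := by
      rw [Finset.sum_range_one]
      have := termA 0
      linarith
    rw [hL]
    linarith

theorem stmt_12 (s t x : ℝ) (hs : 0 < s) (ht : 0 < t) (hst : s ≠ t) (hx : 0 ≤ x) :
    psi (x + Real.sqrt (s * t)) <
      (Real.log (Real.Gamma (x + t)) - Real.log (Real.Gamma (x + s))) / (t - s) ∧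
    (Real.log (Real.Gamma (x + t)) - Real.log (Real.Gamma (x + s))) / (t - s) <
      psi (x + (s + t) / 2) := by
  rcases hst.lt_or_gt with h | h
  · exact aux hs h hx
  · have e : (Real.log (Real.Gamma (x + t)) - Real.log (Real.Gamma (x + s))) / (t - s)
        = (Real.log (Real.Gamma (x + s)) - Real.log (Real.Gamma (x + t))) / (s - t) := by
      rw [← neg_div_neg_eq, neg_sub, neg_sub]
    obtain ⟨h1, h2⟩ := aux ht h hx
    rw [mul_comm t s] at h1
    rw [e, show (s + t) / 2 = (t + s) / 2 by ring]
    exact ⟨h1, h2⟩
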